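/- arXiv:1902.09933 — 5 statements merged into one kernel-verified Lean document; each statement's English description precedes it below -/
import Mathlib

section
/- Let (V,γ) and (W,λ) be finite dimensional real vector spaces with closed proper convex cones of non-empty interior, and f : V → W linear. If f is continuous from the γ-topology on V to the λ-topology on W, then f(γ) ⊆ λ. -/
open Pointwise

/-- If a linear map `f : V → W` is continuous from the `γ`-topology to the `λ`-topology
(preimages of `λ`-invariant open sets are `γ`-invariant open sets), then `f(γ) ⊆ λ`. -/
theorem stmt5 {V W : Type*} [NormedAddCommGroup V] [NormedSpace ℝ V] [FiniteDimensional ℝ V]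
    [NormedAddCommGroup W] [NormedSpace ℝ W] [FiniteDimensional ℝ W]
    (γ : Set V) (h0γ : (0 : V) ∈ γ) (hsmulγ : ∀ c : ℝ, 0 < c → c • γ ⊆ γ)
    (hconvγ : Convex ℝ γ) (hclγ : IsClosed γ) (hproperγ : γ ∩ (-γ) = {0})
    (hintγ : (interior γ).Nonempty)
    (Λ : Set W) (h0Λ : (0 : W) ∈ Λ) (hsmulΛ : ∀ c : ℝ, 0 < c → c • Λ ⊆ Λ)
    (hconvΛ : Convex ℝ Λ) (hclΛ : IsClosed Λ) (hproperΛ : Λ ∩ (-Λ) = {0})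
    (hintΛ : (interior Λ).Nonempty)
    (f : V →ₗ[ℝ] W)
    (hcont : ∀ U : Set W, IsOpen U → U + Λ = U →
      (IsOpen (f ⁻¹' U) ∧ f ⁻¹' U + γ = f ⁻¹' U)) :
    f '' γ ⊆ Λ := by
  rintro w ⟨x, hxγ, rfl⟩
  by_contra hfx
  obtain ⟨φ, u, hu1, hu2⟩ := geometric_hahn_banach_point_closed hconvΛ hclΛ hfx
  have hu0 : u < 0 := by simpa using hu2 0 h0Λ
  have hφΛ : ∀ l ∈ Λ, 0 ≤ φ l := by
    intro l hl
    by_contra h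
    push_neg at h
    obtain ⟨t, ht0, ht⟩ : ∃ t : ℝ, 0 < t ∧ t * φ l < u := by
      refine ⟨(u - 1) / φ l, div_pos_of_neg_of_neg (by linarith) h, ?_⟩
      rw [div_mul_cancel₀ _ (ne_of_lt h)]; linarith
    have := hu2 _ (hsmulΛ t ht0 ⟨l, hl, rfl⟩)
    rw [map_smul, smul_eq_mul] at this
    linarith
  set U : Set W := {w | φ (f x) < φ w} with hU
  have hUopen : IsOpen U := isOpen_lt continuous_const φ.continuous
  have hUadd : U + Λ = U := by
    apply Set.Subset.antisymm
    · rintro w ⟨a, ha, b, hb, rfl⟩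
      have hb' := hφΛ b hb
      simp only [hU, Set.mem_setOf_eq, map_add] at ha ⊢
      linarith
    · intro w hw
      exact ⟨w, hw, 0, h0Λ, by simp⟩
  obtain ⟨hop, hadd⟩ := hcont U hUopen hUadd
  have h0 : (0 : V) ∈ f ⁻¹' U := by
    simp only [Set.mem_preimage, map_zero, hU, Set.mem_setOf_eq]
    linarith
  have hx : x ∈ f ⁻¹' U := by
    rw [← hadd]
    exact ⟨0, h0, x, hxγ, by simp⟩
  simp only [Set.mem_preimage, hU, Set.mem_setOf_eq] at hx
  exact lt_irrefl _ hx
end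

section
/- Let V be a finite dimensional real vector space and γ a closed proper convex cone with non-empty interior. Define α^t on γ-invariant-open-generated Alexandrov opens by α^t(U) = ⋃_{x ∈ U} (x + interior γ) for any lower set U of (V, ≤_γ). Then for all lower sets U, W of (V, ≤_γ): α^t(U ∩ W) = α^t(U) ∩ α^t(W). -/
open Pointwise

/-- For lower sets `U, W` of `(V, ≤_γ)` (i.e. `U + γ = U`), the map
`α^t(U) = ⋃_{x ∈ U} (x + interior γ)` satisfies `α^t(U ∩ W) = α^t(U) ∩ α^t(W)`. -/
theorem stmt10 {V : Type*} [NormedAddCommGroup V] [NormedSpace ℝ V] [FiniteDimensional ℝ V]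
    (γ : Set V) (h0 : (0 : V) ∈ γ) (hsmul : ∀ c : ℝ, 0 < c → c • γ ⊆ γ)
    (hconv : Convex ℝ γ) (hcl : IsClosed γ) (hproper : γ ∩ (-γ) = {0})
    (hint : (interior γ).Nonempty)
    (U W : Set V) (hU : U + γ = U) (hW : W + γ = W) :
    (⋃ x ∈ U ∩ W, (x + ·) '' interior γ) =
      (⋃ x ∈ U, (x + ·) '' interior γ) ∩ (⋃ x ∈ W, (x + ·) '' interior γ) := by
  have hcone : ∀ c : ℝ, 0 < c → ∀ v ∈ interior γ, c • v ∈ interior γ := by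
    intro c hc v hv
    have h1 : c • v ∈ c • interior γ := Set.smul_mem_smul_set hv
    rw [← interior_smul₀ (ne_of_gt hc)] at h1
    exact interior_mono (hsmul c hc) h1
  ext y
  simp only [Set.mem_iUnion, Set.mem_image, Set.mem_inter_iff]
  constructor
  · rintro ⟨x, ⟨hxU, hxW⟩, a, ha, rfl⟩
    exact ⟨⟨x, hxU, a, ha, rfl⟩, ⟨x, hxW, a, ha, rfl⟩⟩
  · rintro ⟨⟨x, hxU, a, ha, rfl⟩, ⟨x', hx'W, a', ha', heq⟩⟩
    -- find ε ∈ (0,1) with a - ε • a' ∈ interior γ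
    have hcont : ContinuousAt (fun ε : ℝ => a - ε • a') 0 := by fun_prop
    have hmem : (fun ε : ℝ => a - ε • a') 0 ∈ interior γ := by simpa using ha
    have hev : ∀ᶠ ε : ℝ in nhds 0, a - ε • a' ∈ interior γ :=
      hcont.eventually_mem (isOpen_interior.mem_nhds hmem)
    obtain ⟨δ, hδ, hball⟩ := Metric.eventually_nhds_iff.mp hev
    set ε : ℝ := min (δ / 2) (1 / 2) with hε
    have hε0 : 0 < ε := lt_min (by linarith) (by norm_num)
    have hε1 : ε < 1 := lt_of_le_of_lt (min_le_right _ _) (by norm_num)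
    have haε : a - ε • a' ∈ interior γ := by
      apply hball
      simp only [Real.dist_eq, sub_zero]
      rw [abs_of_pos hε0]
      exact lt_of_le_of_lt (min_le_left _ _) (by linarith)
    set z : V := x + (a - ε • a') with hz
    have hzU : z ∈ U := by
      rw [← hU]; exact Set.add_mem_add hxU (interior_subset haε)
    have hzW : z ∈ W := by
      have hz' : z = x' + (1 - ε) • a' := by
        have hx : x = x' + a' - a := by rw [heq]; abel
        rw [hz, hx]; module
      rw [hz', ← hW]
      exact Set.add_mem_add hx'W (interior_subset (hcone _ (by linarith) _ ha'))
    refine ⟨z, ⟨hzU, hzW⟩, ε • a', hcone _ hε0 _ ha', ?_⟩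
    rw [hz]; abel
end

section
/- Let V be a finite dimensional real normed vector space with a closed proper convex cone γ of non-empty interior, and let v ∈ Int(−γ). Then the set B_v = (v + γ) ∩ (−v − γ) is a symmetric, closed, bounded, convex subset of V with 0 in its interior. -/
/-!
`B_v` is the order interval `[v, -v]` of the cone order `x ≤ y ↔ y - x ∈ γ`, and negation
reverses that order. Closedness, convexity and `0 ∈ Int B_v` pass from `γ` to the interval
through translations. For boundedness, normalise an unbounded sequence of points of an order
interval `[a, b]` and pass to a convergent subsequence on the unit sphere: its limit lies in
both `γ` and `-γ`, so it vanishes, which is impossible.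
-/

open Pointwise
open Filter Set Topology

def coneInterval {V : Type*} [AddCommGroup V] (γ : Set V) (a b : V) : Set V :=
  {x | x - a ∈ γ ∧ b - x ∈ γ}

section Algebraic

variable {V : Type*} [AddCommGroup V] {γ : Set V}

theorem image_add_inter_image_add_neg_eq_coneInterval (γ : Set V) (v : V) :
    ((v + ·) '' γ) ∩ ((-v + ·) '' (-γ)) = coneInterval γ v (-v) := by
  ext x
  rw [mem_inter_iff, image_add_left, image_add_left, mem_preimage, mem_preimage, Set.mem_neg]
  change _ ↔ _ ∧ _
  congr! 2 <;> abel

theorem neg_coneInterval (γ : Set V) (a b : V) :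
    -coneInterval γ a b = coneInterval γ (-b) (-a) := by
  ext x
  change _ ∧ _ ↔ _ ∧ _
  refine and_comm.trans ?_
  congr! 2 <;> abel

theorem Convex.coneInterval [Module ℝ V] (hγ : Convex ℝ γ) (a b : V) :
    Convex ℝ (coneInterval γ a b) := by
  have h₁ : {x | x - a ∈ γ} = a +ᵥ γ := by
    ext; simp [mem_vadd_set_iff_neg_vadd_mem, neg_add_eq_sub]
  have h₂ : {x | b - x ∈ γ} = b +ᵥ -γ := by
    ext; simp [mem_vadd_set_iff_neg_vadd_mem, neg_add_eq_sub]
  rw [_root_.coneInterval, ofPred_and, h₁, h₂]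
  exact (hγ.vadd a).inter (hγ.neg.vadd b)

end Algebraic

section Topological

variable {V : Type*} [AddCommGroup V] [TopologicalSpace V] [IsTopologicalAddGroup V]
  {γ : Set V}

theorem IsClosed.coneInterval (hγ : IsClosed γ) (a b : V) : IsClosed (coneInterval γ a b) :=
  (hγ.preimage (continuous_sub_right a)).inter (hγ.preimage (continuous_sub_left b))

theorem mem_interior_coneInterval {a b x : V} (ha : x - a ∈ interior γ)
    (hb : b - x ∈ interior γ) : x ∈ interior (coneInterval γ a b) := by
  rw [coneInterval, ofPred_and, interior_inter]
  exact ⟨preimage_interior_subset_interior_preimage (continuous_sub_right a) ha,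
    preimage_interior_subset_interior_preimage (continuous_sub_left b) hb⟩

end Topological

section Normed

variable {V : Type*} [NormedAddCommGroup V] [NormedSpace ℝ V] {γ : Set V}

theorem mem_of_tendsto_inv_norm_smul {ι : Type*} {l : Filter ι} [l.NeBot]
    (hγ : IsClosed γ) (hsmul : ∀ c : ℝ, 0 < c → c • γ ⊆ γ) {x : ι → V} {a w : V}
    (hxa : ∀ i, x i - a ∈ γ) (hx : Tendsto (‖x ·‖) l atTop)
    (hw : Tendsto (fun i ↦ ‖x i‖⁻¹ • x i) l (𝓝 w)) : w ∈ γ := by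
  have hinv : Tendsto (‖x ·‖⁻¹) l (𝓝 0) := tendsto_inv_atTop_zero.comp hx
  have hlim : Tendsto (fun i ↦ ‖x i‖⁻¹ • (x i - a)) l (𝓝 w) := by
    simpa [smul_sub] using hw.sub (hinv.smul_const a)
  refine hγ.mem_of_tendsto hlim ?_
  filter_upwards [hx.eventually_gt_atTop 0] with i hi
  exact hsmul _ (inv_pos.2 hi) (smul_mem_smul_set (hxa i))

theorem isBounded_coneInterval [FiniteDimensional ℝ V] (hγ : IsClosed γ)
    (hsmul : ∀ c : ℝ, 0 < c → c • γ ⊆ γ) (hproper : γ ∩ -γ = {0}) (a b : V) :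
    Bornology.IsBounded (coneInterval γ a b) := by
  by_contra hunb
  simp only [isBounded_iff_forall_norm_le, not_exists, not_forall, not_le] at hunb
  choose x hx hxn using fun n : ℕ ↦ hunb n
  have hx_top : Tendsto (‖x ·‖) atTop atTop :=
    tendsto_atTop_mono (fun n ↦ (hxn n).le) tendsto_natCast_atTop_atTop
  have hsphere : ∀ n, ‖x n‖⁻¹ • x n ∈ Metric.sphere (0 : V) 1 := fun n ↦ by
    rw [mem_sphere_zero_iff_norm, norm_smul, norm_inv, norm_norm]
    exact inv_mul_cancel₀ ((Nat.cast_nonneg n).trans_lt (hxn n)).ne'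
  obtain ⟨w, hw, φ, hφ, hlim⟩ := (isCompact_sphere (0 : V) 1).tendsto_subseq hsphere
  have hsmul_neg : ∀ c : ℝ, 0 < c → c • -γ ⊆ -γ := fun c hc ↦ by
    rw [smul_set_neg]; exact neg_subset_neg.2 (hsmul c hc)
  have hwγ : w ∈ γ :=
    mem_of_tendsto_inv_norm_smul hγ hsmul (fun k ↦ (hx (φ k)).1)
      (hx_top.comp hφ.tendsto_atTop) hlim
  have hwγ' : w ∈ -γ :=
    mem_of_tendsto_inv_norm_smul hγ.neg hsmul_neg (a := b) (fun k ↦ by simpa using (hx (φ k)).2)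
      (hx_top.comp hφ.tendsto_atTop) hlim
  have hw0 : w ∈ γ ∩ -γ := ⟨hwγ, hwγ'⟩
  rw [hproper, mem_singleton_iff] at hw0
  simp [hw0] at hw

end Normed

theorem stmt12_general {V : Type*} [NormedAddCommGroup V] [NormedSpace ℝ V] [FiniteDimensional ℝ V]
    (γ : Set V) (hsmul : ∀ c : ℝ, 0 < c → c • γ ⊆ γ)
    (hconv : Convex ℝ γ) (hcl : IsClosed γ) (hproper : γ ∩ (-γ) = {0})
    (v : V) (hv : v ∈ interior (-γ)) :
    (((v + ·) '' γ) ∩ ((-v + ·) '' (-γ))) = -(((v + ·) '' γ) ∩ ((-v + ·) '' (-γ))) ∧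
    IsClosed (((v + ·) '' γ) ∩ ((-v + ·) '' (-γ))) ∧
    Bornology.IsBounded (((v + ·) '' γ) ∩ ((-v + ·) '' (-γ))) ∧
    Convex ℝ (((v + ·) '' γ) ∩ ((-v + ·) '' (-γ))) ∧
    (0 : V) ∈ interior (((v + ·) '' γ) ∩ ((-v + ·) '' (-γ))) := by
  rw [image_add_inter_image_add_neg_eq_coneInterval]
  have hv' : -v ∈ interior γ := ((Homeomorph.neg V).preimage_interior γ).symm.subset hv
  refine ⟨?_, hcl.coneInterval v (-v), isBounded_coneInterval hcl hsmul hproper v (-v),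
    hconv.coneInterval v (-v), mem_interior_coneInterval ?_ ?_⟩
  · rw [neg_coneInterval, neg_neg]
  · rwa [zero_sub]
  · rwa [sub_zero]

/-- For `v ∈ Int(-γ)`, the set `B_v = (v + γ) ∩ (-v - γ)` is a symmetric, closed, bounded,
convex subset of `V` with `0` in its interior. -/
theorem stmt12 {V : Type*} [NormedAddCommGroup V] [NormedSpace ℝ V] [FiniteDimensional ℝ V]
    (γ : Set V) (h0 : (0 : V) ∈ γ) (hsmul : ∀ c : ℝ, 0 < c → c • γ ⊆ γ)
    (hconv : Convex ℝ γ) (hcl : IsClosed γ) (hproper : γ ∩ (-γ) = {0})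
    (hint : (interior γ).Nonempty)
    (v : V) (hv : v ∈ interior (-γ)) :
    (((v + ·) '' γ) ∩ ((-v + ·) '' (-γ))) = -(((v + ·) '' γ) ∩ ((-v + ·) '' (-γ))) ∧
    IsClosed (((v + ·) '' γ) ∩ ((-v + ·) '' (-γ))) ∧
    Bornology.IsBounded (((v + ·) '' γ) ∩ ((-v + ·) '' (-γ))) ∧
    Convex ℝ (((v + ·) '' γ) ∩ ((-v + ·) '' (-γ))) ∧
    (0 : V) ∈ interior (((v + ·) '' γ) ∩ ((-v + ·) '' (-γ))) :=
  stmt12_general γ hsmul hconv hcl hproper v hv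
end

section
/- Let V be a finite dimensional real vector space with closed proper convex cone γ of non-empty interior, and let v ∈ Int(−γ). Suppose S ⊆ Int(−γ) satisfies S + Int(−γ) ⊆ S and c·v ∈ S for all c > 0. Then S = Int(−γ). -/
open Pointwise Topology Filter

/-!
Every `x` in the open set `U = Int(-γ)` can be written as `s + (x - s)` with `s ∈ S` so close to `0`
that `x - s` is still in `U`; the ray `{c • v | c > 0}` supplies such `s`, and `S + U ⊆ S` then gives
`x ∈ S`.
-/

theorem IsOpen.eq_of_add_subset_of_zero_mem_closure {G : Type*} [AddCommGroup G] [TopologicalSpace G]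
    [IsTopologicalAddGroup G] {U S : Set G} (hU : IsOpen U) (hSU : S ⊆ U) (hadd : S + U ⊆ S)
    (h0 : (0 : G) ∈ closure S) : S = U := by
  refine hSU.antisymm fun x hx => ?_
  have hnhds : {s | x - s ∈ U} ∈ 𝓝 (0 : G) :=
    (continuous_const.sub continuous_id).continuousAt.preimage_mem_nhds (by simpa using hU.mem_nhds hx)
  obtain ⟨s, hsU, hsS⟩ := mem_closure_iff_nhds.mp h0 _ hnhds
  simpa using hadd (Set.add_mem_add hsS hsU)

theorem zero_mem_closure_of_forall_pos_smul_mem {E : Type*} [AddCommGroup E] [Module ℝ E]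
    [TopologicalSpace E] [ContinuousSMul ℝ E] {S : Set E} {v : E} (hv : ∀ c : ℝ, 0 < c → c • v ∈ S) :
    (0 : E) ∈ closure S := by
  have hlim : Tendsto (fun c : ℝ => c • v) (𝓝[>] 0) (𝓝 0) := by
    have hcont : Continuous fun c : ℝ => c • v := continuous_id.smul continuous_const
    simpa using (hcont.tendsto 0).mono_left nhdsWithin_le_nhds
  exact mem_closure_of_tendsto hlim (eventually_mem_nhdsWithin.mono hv)

theorem stmt17_general {V : Type*} [NormedAddCommGroup V] [NormedSpace ℝ V]
    (γ : Set V)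
    (v : V)
    (S : Set V) (hS : S ⊆ interior (-γ))
    (hSadd : S + interior (-γ) ⊆ S)
    (hSv : ∀ c : ℝ, 0 < c → c • v ∈ S) :
    S = interior (-γ) :=
  isOpen_interior.eq_of_add_subset_of_zero_mem_closure hS hSadd
    (zero_mem_closure_of_forall_pos_smul_mem hSv)

/-- If `S ⊆ Int(-γ)` satisfies `S + Int(-γ) ⊆ S` and contains `c•v` for all `c > 0`
(where `v ∈ Int(-γ)`), then `S = Int(-γ)`. -/
theorem stmt17 {V : Type*} [NormedAddCommGroup V] [NormedSpace ℝ V] [FiniteDimensional ℝ V]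
    (γ : Set V) (h0 : (0 : V) ∈ γ) (hsmul : ∀ c : ℝ, 0 < c → c • γ ⊆ γ)
    (hconv : Convex ℝ γ) (hcl : IsClosed γ) (hproper : γ ∩ (-γ) = {0})
    (hint : (interior γ).Nonempty)
    (v : V) (hv : v ∈ interior (-γ))
    (S : Set V) (hS : S ⊆ interior (-γ))
    (hSadd : S + interior (-γ) ⊆ S)
    (hSv : ∀ c : ℝ, 0 < c → c • v ∈ S) :
    S = interior (-γ) :=
  stmt17_general γ v S hS hSadd hSv
end

section
/- Let F be a sheaf of k-modules on ℝ with the Alexandrov topology of the order x ≤ y ⇔ x + γ ⊆ y + γ for γ = [0,∞), whose basic opens are the sets s + γ. Then F satisfies F(s + Int(γ)) ≅ 0 for all s ∈ ℝ if and only if the restriction morphism F(s+γ) → F(t+γ) is zero whenever s < t. -/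
open CategoryTheory CategoryTheory.Limits Opposite Pointwise

/-- The preorder `x ≤_γ y ⇔ x + γ ⊆ y + γ` associated with a cone `γ`. -/
def coneLe {V : Type*} [AddCommGroup V] (γ : Set V) (x y : V) : Prop :=
  (x + ·) '' γ ⊆ (y + ·) '' γ

/-- The Alexandrov topology of `(V, ≤_γ)`: open sets are the lower sets. -/
def alexTop {V : Type*} [AddCommGroup V] (γ : Set V) : TopologicalSpace V where
  IsOpen U := ∀ ⦃x⦄, x ∈ U → ∀ ⦃y⦄, coneLe γ y x → y ∈ U
  isOpen_univ := fun _ _ _ _ => trivial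
  isOpen_inter := fun _ _ hU hW _ hx _ hyx => ⟨hU hx.1 hyx, hW hx.2 hyx⟩
  isOpen_sUnion := fun _ h _ hx _ hyx => by
    obtain ⟨s, hs, hxs⟩ := hx
    exact ⟨s, hs, h s hs hxs hyx⟩

/-- Lemma 3.7: a sheaf `F` of `k`-modules on `ℝ` with the Alexandrov topology of
`≤_γ`, `γ = [0,∞)`, is ephemeral (vanishes on all `γ`-topology opens `s + Int γ`)
iff all restriction morphisms `F(s+γ) → F(t+γ)`, `s < t`, are zero. -/
theorem stmt19 (k : Type) [Field k]
    (F : TopCat.Presheaf (ModuleCat k) (@TopCat.of ℝ (alexTop (Set.Ici (0 : ℝ)))))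
    (hF : F.IsSheaf)
    (B Bo : ℝ → @TopologicalSpace.Opens ℝ (alexTop (Set.Ici (0 : ℝ))))
    (hB : ∀ s : ℝ, (B s : Set ℝ) = (s + ·) '' Set.Ici (0 : ℝ))
    (hBo : ∀ s : ℝ, (Bo s : Set ℝ) = (s + ·) '' interior (Set.Ici (0 : ℝ))) :
    (∀ s : ℝ, IsZero (F.obj (op (Bo s)))) ↔
      (∀ (s t : ℝ), s < t → ∀ (hst : B t ≤ B s), F.map (homOfLE hst).op = 0) := by
  -- identify the basic opens with intervals
  have hB' : ∀ s : ℝ, (B s : Set ℝ) = Set.Ici s := by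
    intro s
    rw [hB s]
    ext x
    constructor
    · rintro ⟨y, hy, rfl⟩; exact le_add_of_nonneg_right (Set.mem_Ici.mp hy)
    · intro hx; exact ⟨x - s, by simpa using hx, by ring⟩
  have hBo' : ∀ s : ℝ, (Bo s : Set ℝ) = Set.Ioi s := by
    intro s
    rw [hBo s, interior_Ici]
    ext x
    constructor
    · rintro ⟨y, hy, rfl⟩; exact lt_add_of_pos_right s hy
    · intro hx; exact ⟨x - s, by simpa using hx, by ring⟩
  have hle : ∀ {U V : @TopologicalSpace.Opens ℝ (alexTop (Set.Ici (0 : ℝ)))},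
      (U : Set ℝ) ⊆ (V : Set ℝ) → U ≤ V := fun h => h
  constructor
  · -- ephemeral → restrictions vanish
    intro hz s t hst h
    have h1 : Bo s ≤ B s := hle (by rw [hB' s, hBo' s]; exact Set.Ioi_subset_Ici_self)
    have h2 : B t ≤ Bo s := hle (by rw [hB' t, hBo' s]; exact fun x hx => lt_of_lt_of_le hst hx)
    have : homOfLE h = homOfLE h2 ≫ homOfLE h1 := rfl
    rw [this, op_comp, F.map_comp]
    rw [(hz s).eq_of_tgt (F.map (homOfLE h1).op) 0]
    simp
  · -- restrictions vanish → ephemeral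
    intro hz s
    rw [IsZero.iff_id_eq_zero]
    -- the cover of (s, ∞) by [s + 1/(n+1), ∞)
    set U : ℕ → @TopologicalSpace.Opens ℝ (alexTop (Set.Ici (0 : ℝ))) :=
      fun n => B (s + 1 / (n + 1)) with hU
    have hpos : ∀ n : ℕ, (0 : ℝ) < 1 / ((n : ℝ) + 1) := fun n => by positivity
    have iUV : ∀ n : ℕ, U n ⟶ Bo s := fun n =>
      homOfLE (hle (by
        rw [hU, hB', hBo']
        exact fun z hz => lt_of_lt_of_le (lt_add_of_pos_right s (hpos n)) hz))
    have hcov : Sieve.ofArrows U iUV ∈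
        @Opens.grothendieckTopology
          ℝ (alexTop (Set.Ici (0 : ℝ))) (Bo s) := by
      intro z hz
      have hz' : z ∈ (Bo s : Set ℝ) := hz
      rw [hBo'] at hz'
      obtain ⟨n, hn⟩ := exists_nat_one_div_lt (sub_pos.mpr (Set.mem_Ioi.mp hz'))
      refine ⟨U n, iUV n, Sieve.ofArrows_mk U iUV n, ?_⟩
      show z ∈ (U n : Set ℝ)
      rw [hU, hB']
      have : s + 1 / ((n : ℝ) + 1) ≤ z := by linarith [hn]
      simpa using this
    refine hF.hom_ext_ofArrows iUV hcov fun n => ?_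
    -- each restriction to a cover member is zero
    suffices hres : F.map (iUV n).op = 0 by rw [hres]; simp
    have hlt : s + 1 / ((n : ℝ) + 1 + 1) < s + 1 / (n + 1) := by
      have h1 : (0:ℝ) < (n:ℝ) + 1 := by positivity
      have : 1 / ((n : ℝ) + 1 + 1) < 1 / ((n:ℝ) + 1) := by
        apply one_div_lt_one_div_of_lt h1; linarith
      linarith
    have hBle : B (s + 1 / (n + 1)) ≤ B (s + 1 / ((n : ℝ) + 1 + 1)) := by
      apply hle; rw [hB', hB']; exact Set.Ici_subset_Ici.mpr hlt.le
    have hmid : B (s + 1 / ((n : ℝ) + 1 + 1)) ≤ Bo s := by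
      apply hle; rw [hB', hBo']
      exact fun z hz => lt_of_lt_of_le (lt_add_of_pos_right s (by positivity)) hz
    have hfac2 : (iUV n : U n ⟶ Bo s) = (homOfLE hBle ≫ homOfLE hmid :
        U n ⟶ Bo s) := rfl
    rw [hfac2, op_comp, F.map_comp, hz _ _ hlt hBle]
    simp
end
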